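/- Every Gurariĭ space has the Daugavet property, and hence also the strong diameter 2 property. -/

import Mathlib

universe u v

open Metric Set

section Defs

variable {Y : Type*} [NormedAddCommGroup Y] [NormedSpace ℝ Y]

/-- `X` is an ideal in `Y`. -/
def IsIdeal (X : Subspace ℝ Y) : Prop :=
  ∀ ε : ℝ, 0 < ε → ∀ E : Subspace ℝ Y, FiniteDimensional ℝ E →
    ∃ T : E →ₗ[ℝ] X,
      (∀ e : E, (e : Y) ∈ X → ((T e : X) : Y) = (e : Y)) ∧
      (∀ e : E, ‖T e‖ ≤ (1 + ε) * ‖e‖)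

/-- `X` is a super-ideal in `Y`. -/
def IsSuperIdeal (X : Subspace ℝ Y) : Prop :=
  ∀ ε : ℝ, 0 < ε → ∀ E : Subspace ℝ Y, FiniteDimensional ℝ E →
    ∃ T : E →ₗ[ℝ] X,
      (∀ e : E, (e : Y) ∈ X → ((T e : X) : Y) = (e : Y)) ∧
      (∀ e : E, (1 + ε)⁻¹ * ‖e‖ ≤ ‖T e‖ ∧ ‖T e‖ ≤ (1 + ε) * ‖e‖)

/-- `X` is a super u-ideal in `Y`. -/
def IsSuperUIdeal (X : Subspace ℝ Y) : Prop :=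
  ∀ ε : ℝ, 0 < ε → ∀ E : Subspace ℝ Y, FiniteDimensional ℝ E →
    ∃ T : E →ₗ[ℝ] X,
      (∀ e : E, (e : Y) ∈ X → ((T e : X) : Y) = (e : Y)) ∧
      (∀ e : E, (1 + ε)⁻¹ * ‖e‖ ≤ ‖T e‖ ∧ ‖T e‖ ≤ (1 + ε) * ‖e‖) ∧
      (∀ e : E, ‖(e : Y) - (2 : ℝ) • ((T e : X) : Y)‖ ≤ (1 + ε) * ‖e‖)

/-- `φ : X* → Y*` is a Hahn-Banach extension operator. -/
def IsHahnBanachExtensionOperator (X : Subspace ℝ Y)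
    (φ : (X →L[ℝ] ℝ) →L[ℝ] (Y →L[ℝ] ℝ)) : Prop :=
  ∀ f : X →L[ℝ] ℝ, (∀ x : X, φ f (x : Y) = f x) ∧ ‖φ f‖ = ‖f‖

/-- A set of functionals `V ⊆ Y*` is 1-norming for `Y`. -/
def IsOneNorming (V : Set (Y →L[ℝ] ℝ)) : Prop :=
  ∀ y : Y, ‖y‖ = sSup {r : ℝ | ∃ v ∈ V, ‖v‖ ≤ 1 ∧ r = |v y|}

end Defs

section Props

variable (Z : Type*) [NormedAddCommGroup Z] [NormedSpace ℝ Z]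

/-- A slice of the closed unit ball of `Z`. -/
def IsSlice (S : Set Z) : Prop :=
  ∃ (f : Z →L[ℝ] ℝ) (ε : ℝ), ‖f‖ = 1 ∧ 0 < ε ∧
    S = {z | z ∈ closedBall (0 : Z) 1 ∧ 1 - ε < f z}

/-- The local diameter 2 property. -/
def HasLocalDiameterTwoProperty : Prop :=
  ∀ S : Set Z, IsSlice Z S → Metric.diam S = 2

/-- The diameter 2 property. -/
def HasDiameterTwoProperty : Prop :=
  ∀ U : Set Z, U.Nonempty →
    (∃ V : Set Z, @IsOpen (WeakSpace ℝ Z) _ V ∧ U = V ∩ closedBall (0 : Z) 1) →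
    Metric.diam U = 2

/-- The strong diameter 2 property. -/
def HasStrongDiameterTwoProperty : Prop :=
  ∀ (n : ℕ), 0 < n → ∀ (S : Fin n → Set Z) (lam : Fin n → ℝ),
    (∀ i, IsSlice Z (S i)) → (∀ i, 0 ≤ lam i) → (∑ i, lam i) = 1 →
    Metric.diam {z : Z | ∃ x : Fin n → Z, (∀ i, x i ∈ S i) ∧ z = ∑ i, lam i • x i} = 2

/-- The Daugavet property. -/
def HasDaugavetProperty : Prop :=
  ∀ T : Z →L[ℝ] Z, Module.finrank ℝ (LinearMap.range (T : Z →ₗ[ℝ] Z)) = 1 →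
    ‖ContinuousLinearMap.id ℝ Z + T‖ = 1 + ‖T‖

end Props

/-- `X` is a Gurariĭ space. -/
def IsGurarii (X : Type*) [NormedAddCommGroup X] [NormedSpace ℝ X] : Prop :=
  ∀ ε : ℝ, 0 < ε →
    ∀ (F : Type) [NormedAddCommGroup F] [NormedSpace ℝ F] [FiniteDimensional ℝ F],
      ∀ (E : Subspace ℝ F) (TE : E →ₗᵢ[ℝ] X),
        ∃ TF : F →ₗ[ℝ] X,
          (∀ e : E, TF (e : F) = TE e) ∧
          (∀ f : F, (1 + ε)⁻¹ * ‖f‖ ≤ ‖TF f‖ ∧ ‖TF f‖ ≤ (1 + ε) * ‖f‖)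

/-- `X` is a Lindenstrauss space: its dual is isometric to some `L¹(μ)`. -/
def IsLindenstrauss (X : Type u) [NormedAddCommGroup X] [NormedSpace ℝ X] : Prop :=
  ∃ (α : Type u) (m : MeasurableSpace α) (μ : @MeasureTheory.Measure α m),
    Nonempty ((X →L[ℝ] ℝ) ≃ₗᵢ[ℝ] MeasureTheory.Lp ℝ 1 μ)

/-!
In `E ⊕∞ ℝ` the new unit vector `w` satisfies `‖y ± w‖ ≤ 1` for all `y` in the unit ball of `E`.
Realising this extension of `span {y₁, …, yₙ}` inside `X`, the points `(yᵢ ± w) / (1 + δ)` lie in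
every slice that contains `yᵢ` deeply enough (they average to `yᵢ / (1 + δ)`), and the two resulting
convex combinations are `2 w / (1 + δ)` apart: this is the strong diameter 2 property.

For the Daugavet property, adjoin to `span {x, y₀}` two unit vectors `y₁`, `y₂` subject only to
`l y₁ + (1 - l) y₂ = y₀`, i.e. take the quotient of `E ⊕₁ ℝ ⊕₁ ℝ` by that relation. There
`‖x + y₁‖ ≥ 2 - 2 l`, and since `f y₂ ≤ 1` the relation forces `f y₁ ≈ 1` as soon as `f y₀ ≈ 1`.
So every slice of the ball contains points `y` with `‖x + y‖ ≈ 2`, and testing `I + c ⊗ x` on such a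
`y` in the slice of `c`, with a functional norming `x + y`, gives `‖I + c ⊗ x‖ ≥ 1 + ‖c‖`.
-/

open Filter Topology

section Gurarii

variable {X : Type*} [NormedAddCommGroup X] [NormedSpace ℝ X]

theorem ContinuousLinearMap.apply_le_norm {f : X →L[ℝ] ℝ} (hf : ‖f‖ ≤ 1) (z : X) : f z ≤ ‖z‖ :=
  (le_abs_self _).trans (by simpa using f.le_of_opNorm_le hf z)

theorem ContinuousLinearMap.exists_norm_le_one_lt_apply (f : X →L[ℝ] ℝ) {r : ℝ} (hr : r < ‖f‖) :
    ∃ y : X, ‖y‖ ≤ 1 ∧ r < f y := by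
  obtain ⟨y, hy, hry⟩ := f.exists_lt_apply_of_lt_opNorm hr
  rw [Real.norm_eq_abs, lt_abs] at hry
  rcases hry with h | h
  · exact ⟨y, hy.le, h⟩
  · exact ⟨-y, by simpa using hy.le, by simpa using h⟩

theorem ContinuousLinearMap.exists_eq_smulRight_of_finrank_range_eq_one (T : X →L[ℝ] X)
    (hT : Module.finrank ℝ (LinearMap.range (T : X →ₗ[ℝ] X)) = 1) :
    ∃ (c : X →L[ℝ] ℝ) (x₀ : X), ‖x₀‖ = 1 ∧ T = c.smulRight x₀ := by
  have : Nontrivial (LinearMap.range (T : X →ₗ[ℝ] X)) := Module.nontrivial_of_finrank_eq_succ hT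
  obtain ⟨v, hv⟩ := exists_ne (0 : LinearMap.range (T : X →ₗ[ℝ] X))
  have hv' : (v : X) ≠ 0 := by simpa using hv
  set x₀ := ‖(v : X)‖⁻¹ • (v : X)
  have hx₀ : ‖x₀‖ = 1 := norm_smul_inv_norm hv'
  obtain ⟨g, -, hgx⟩ := exists_dual_vector ℝ x₀ (by simp [hx₀])
  refine ⟨g.comp T, x₀, hx₀, ContinuousLinearMap.ext fun z => ?_⟩
  obtain ⟨a, ha⟩ := (finrank_eq_one_iff_of_nonzero' v hv).1 hT ⟨T z, z, rfl⟩
  have hTz : T z = (a * ‖(v : X)‖) • x₀ := by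
    rw [mul_smul, smul_inv_smul₀ (norm_ne_zero_iff.2 hv'), ← Submodule.coe_smul, ha]
  rw [smulRight_apply, comp_apply, hTz, map_smul, hgx, hx₀]
  simp

theorem Submodule.Quotient.le_norm_mk_of_forall_le_norm_sub_smul {V : Type*}
    [SeminormedAddCommGroup V] [NormedSpace ℝ V] {v k : V} {r : ℝ}
    (h : ∀ t : ℝ, r ≤ ‖v - t • k‖) : r ≤ ‖Submodule.Quotient.mk (p := ℝ ∙ k) v‖ := by
  refine le_of_forall_pos_lt_add fun ε hε => ?_
  obtain ⟨m, hm, hlt⟩ := Submodule.Quotient.norm_mk_lt (Submodule.Quotient.mk (p := ℝ ∙ k) v) hε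
  obtain ⟨t, ht⟩ := Submodule.mem_span_singleton.1 ((Submodule.Quotient.eq _).1 hm.symm)
  calc r ≤ ‖v - t • k‖ := h t
    _ = ‖m‖ := by rw [ht, sub_sub_cancel]
    _ < _ := hlt

theorem two_sub_two_mul_le_norm_sub_smul_add {x y : X} (hx : ‖x‖ = 1) (hy : ‖y‖ ≤ 1)
    {l : ℝ} (hl : 0 ≤ l) (hl2 : l ≤ 1 / 2) (t : ℝ) :
    2 - 2 * l ≤ ‖x - t • y‖ + (|1 + t * l| + |t| * (1 - l)) := by
  have h₁ : 1 - |t| ≤ ‖x - t • y‖ := by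
    have := norm_sub_norm_le x (t • y)
    rw [norm_smul, Real.norm_eq_abs, hx] at this
    nlinarith [abs_nonneg t]
  have h₂ : 1 - |t| * l ≤ |1 + t * l| :=
    (show 1 - |t| * l ≤ 1 + t * l by nlinarith [neg_abs_le t]).trans (le_abs_self _)
  rcases le_total |t| 1 with ht | ht
  · nlinarith
  · nlinarith [norm_nonneg (x - t • y)]

theorem IsGurarii.exists_extension (hX : IsGurarii X) {ε : ℝ} (hε : 0 < ε)
    {E F : Type*} [NormedAddCommGroup E] [NormedSpace ℝ E] [NormedAddCommGroup F]
    [NormedSpace ℝ F] [FiniteDimensional ℝ F] (j : E →ₗᵢ[ℝ] F) (T : E →ₗᵢ[ℝ] X) :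
    ∃ TF : F →ₗ[ℝ] X, (∀ e, TF (j e) = T e) ∧
      ∀ f, (1 + ε)⁻¹ * ‖f‖ ≤ ‖TF f‖ ∧ ‖TF f‖ ≤ (1 + ε) * ‖f‖ := by
  -- `IsGurarii` only quantifies over `F : Type`, so move `F` to `Fin d →₀ ℝ` with the induced norm.
  let φ := (Module.finBasis ℝ F).repr.symm
  let : NormedAddCommGroup (Fin (Module.finrank ℝ F) →₀ ℝ) :=
    NormedAddCommGroup.induced _ _ φ.toLinearMap φ.injective
  let : NormedSpace ℝ (Fin (Module.finrank ℝ F) →₀ ℝ) := NormedSpace.induced ℝ _ _ φ.toLinearMap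
  let φᵢ : (Fin (Module.finrank ℝ F) →₀ ℝ) ≃ₗᵢ[ℝ] F := ⟨φ, fun _ => rfl⟩
  let j' := φᵢ.symm.toLinearIsometry.comp j
  obtain ⟨TF, hTF, hbound⟩ := hX ε hε _ (LinearMap.range j'.toLinearMap)
    (T.comp j'.equivRange.symm.toLinearIsometry)
  refine ⟨TF.comp φᵢ.symm.toLinearMap, fun e => ?_, fun f => by simpa using hbound (φᵢ.symm f)⟩
  have h := hTF (j'.equivRange e)
  simp only [LinearIsometry.coe_comp, Function.comp_apply, LinearIsometryEquiv.coe_toLinearIsometry,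
    LinearIsometryEquiv.symm_apply_apply, LinearIsometry.equivRange_apply_coe] at h
  exact h

theorem IsGurarii.exists_forall_norm_add_le (hX : IsGurarii X) {ι : Type*} [Finite ι]
    (y : ι → X) (hy : ∀ i, ‖y i‖ ≤ 1) {δ : ℝ} (hδ : 0 < δ) :
    ∃ w : X, (1 + δ)⁻¹ ≤ ‖w‖ ∧ ∀ i, ‖y i + w‖ ≤ 1 + δ ∧ ‖y i - w‖ ≤ 1 + δ := by
  let E := Submodule.span ℝ (Set.range y)
  have : FiniteDimensional ℝ E := FiniteDimensional.span_of_finite ℝ (Set.finite_range y)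
  let j : E →ₗᵢ[ℝ] E × ℝ := ⟨LinearMap.inl ℝ E ℝ, fun e => by simp [Prod.norm_def]⟩
  obtain ⟨TF, hTF, hbound⟩ := hX.exists_extension hδ j E.subtypeₗᵢ
  have hyE (i : ι) : y i ∈ E := Submodule.subset_span (Set.mem_range_self i)
  have hsmul (i : ι) {s : ℝ} (hs : |s| ≤ 1) : ‖y i + s • TF (0, 1)‖ ≤ 1 + δ := by
    have h := (hbound (j ⟨y i, hyE i⟩ + s • (0, 1))).2
    rw [map_add, map_smul, hTF] at h
    have hj : j ⟨y i, hyE i⟩ = (⟨y i, hyE i⟩, 0) := rfl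
    refine h.trans (mul_le_of_le_one_right (by positivity) ?_)
    simpa [hj, Prod.norm_def, hy i] using hs
  refine ⟨TF (0, 1), by simpa [Prod.norm_def] using (hbound (0, 1)).1, fun i => ⟨?_, ?_⟩⟩
  · simpa using hsmul i (s := 1) (by simp)
  · simpa [sub_eq_add_neg] using hsmul i (s := -1) (by simp)

theorem IsGurarii.hasStrongDiameterTwoProperty (hX : IsGurarii X) :
    HasStrongDiameterTwoProperty X := by
  intro n _ S lam hS hlam hsum
  choose f ε hf hε hSeq using hS
  have hmem {i : Fin n} {z : X} : z ∈ S i ↔ ‖z‖ ≤ 1 ∧ 1 - ε i < f i z := by simp [hSeq i]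
  set A := {z : X | ∃ x : Fin n → X, (∀ i, x i ∈ S i) ∧ z = ∑ i, lam i • x i}
  have hA : A ⊆ closedBall 0 1 := by
    rintro _ ⟨x, hx, rfl⟩
    exact (convex_closedBall 0 1).sum_mem (fun i _ => hlam i) hsum
      fun i _ => mem_closedBall_zero_iff.2 (hmem.1 (hx i)).1
  refine le_antisymm ((diam_mono hA isBounded_closedBall).trans ?_) ?_
  · simpa using diam_closedBall (x := (0 : X)) zero_le_one
  choose y hy hyf using fun i => (f i).exists_norm_le_one_lt_apply
    (show 1 - ε i / 2 < ‖f i‖ by linarith [hf i, hε i])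
  have hclose : ∀ᶠ δ in 𝓝[>] (0 : ℝ), 0 < δ ∧ ∀ i, 1 - ε i < 2 * (1 + δ)⁻¹ * f i (y i) - 1 := by
    refine eventually_mem_nhdsWithin.and (nhdsWithin_le_nhds (eventually_all.2 fun i => ?_))
    have h : ContinuousAt (fun δ : ℝ => 2 * (1 + δ)⁻¹ * f i (y i) - 1) 0 := by
      fun_prop (disch := norm_num)
    exact h.tendsto.eventually_const_lt (by simp; linarith [hyf i])
  have hlim : Tendsto (fun δ : ℝ => 2 * (1 + δ)⁻¹ * (1 + δ)⁻¹) (𝓝[>] 0) (𝓝 2) := by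
    have h : ContinuousAt (fun δ : ℝ => 2 * (1 + δ)⁻¹ * (1 + δ)⁻¹) 0 := by
      fun_prop (disch := norm_num)
    simpa using h.tendsto.mono_left nhdsWithin_le_nhds
  refine le_of_tendsto hlim (hclose.mono fun δ ⟨hδ, hδf⟩ => ?_)
  obtain ⟨w, hw, hyw⟩ := hX.exists_forall_norm_add_le y hy hδ
  set c := (1 + δ)⁻¹
  have hc : 0 < c := by positivity
  have hball {z : X} (hz : ‖z‖ ≤ 1 + δ) : ‖c • z‖ ≤ 1 := by
    rw [norm_smul, Real.norm_of_nonneg hc.le]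
    exact inv_mul_le_one_of_le₀ hz (by positivity)
  -- Both points average to `c • y i`, where `f i` is close to `1`, while `f i ≤ 1` on the ball.
  have hpair (i : Fin n) {a b : X} (hab : c • a + c • b = (2 * c) • y i) (ha : ‖a‖ ≤ 1 + δ)
      (hb : ‖b‖ ≤ 1 + δ) : c • a ∈ S i := by
    refine hmem.2 ⟨hball ha, ?_⟩
    have h := congrArg (f i) hab
    have hfb := ((f i).apply_le_norm (hf i).le _).trans (hball hb)
    simp only [map_add, map_smul, smul_eq_mul] at h hfb ⊢
    linarith [hδf i]
  have hp (i : Fin n) : c • (y i + w) ∈ S i :=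
    hpair i (by module) (hyw i).1 (hyw i).2
  have hm (i : Fin n) : c • (y i - w) ∈ S i :=
    hpair i (by module) (hyw i).2 (hyw i).1
  have hdiff : ∑ i, lam i • c • (y i + w) - ∑ i, lam i • c • (y i - w) = (2 * c) • w := by
    rw [← Finset.sum_sub_distrib, ← one_smul ℝ ((2 * c) • w), ← hsum, Finset.sum_smul]
    exact Finset.sum_congr rfl fun i _ => by module
  have hbdd : Bornology.IsBounded A := isBounded_closedBall.subset hA
  calc 2 * c * c ≤ ‖(2 * c) • w‖ := by
        rw [norm_smul, Real.norm_of_nonneg (by positivity)]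
        exact mul_le_mul_of_nonneg_left hw (by positivity)
    _ = dist (∑ i, lam i • c • (y i + w)) (∑ i, lam i • c • (y i - w)) := by
        rw [dist_eq_norm, hdiff]
    _ ≤ diam A := dist_le_diam_of_mem hbdd ⟨_, hp, rfl⟩ ⟨_, hm, rfl⟩

theorem IsGurarii.exists_convex_combination_eq (hX : IsGurarii X) {x y₀ : X} (hx : ‖x‖ = 1)
    (hy₀ : ‖y₀‖ ≤ 1) {l : ℝ} (hl : 0 ≤ l) (hl2 : l ≤ 1 / 2) {δ : ℝ} (hδ : 0 < δ) :
    ∃ y₁ y₂ : X, ‖y₁‖ ≤ 1 + δ ∧ ‖y₂‖ ≤ 1 + δ ∧ l • y₁ + (1 - l) • y₂ = y₀ ∧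
      (1 + δ)⁻¹ * (2 - 2 * l) ≤ ‖x + y₁‖ := by
  let E := Submodule.span ℝ {x, y₀}
  have : FiniteDimensional ℝ E := FiniteDimensional.span_of_finite ℝ (by simp)
  let xE : E := ⟨x, Submodule.subset_span (by simp)⟩
  let yE : E := ⟨y₀, Submodule.subset_span (by simp)⟩
  let W := WithLp 1 (E × WithLp 1 (ℝ × ℝ))
  let σ : (E × ℝ × ℝ) ≃ₗ[ℝ] W :=
    ((LinearEquiv.refl ℝ E).prodCongr (WithLp.linearEquiv 1 ℝ (ℝ × ℝ)).symm).trans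
      (WithLp.linearEquiv 1 ℝ _).symm
  have hσ (v : E × ℝ × ℝ) : ‖σ v‖ = ‖v.1‖ + (|v.2.1| + |v.2.2|) := by
    change ‖WithLp.toLp 1 (v.1, WithLp.toLp 1 v.2)‖ = _
    simp [WithLp.prod_norm_eq_of_L1]
  -- `W ⧸ ℝ ∙ k` is `E` with two unit vectors `y₁ = σ (0, 1, 0)`, `y₂ = σ (0, 0, 1)` adjoined,
  -- subject only to `l y₁ + (1 - l) y₂ = y₀`.
  let k : W := σ (yE, -l, l - 1)
  have : IsClosed ((ℝ ∙ k : Submodule ℝ W) : Set W) := Submodule.closed_of_finiteDimensional _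
  let π := (ℝ ∙ k).mkQ
  have hπσ {v : E × ℝ × ℝ} {r : ℝ}
      (h : ∀ t : ℝ, r ≤ ‖v.1 - t • yE‖ + (|v.2.1 + t * l| + |v.2.2 + t * (1 - l)|)) :
      r ≤ ‖π (σ v)‖ := by
    refine Submodule.Quotient.le_norm_mk_of_forall_le_norm_sub_smul fun t => ?_
    have hv : v - t • (yE, -l, l - 1) = (v.1 - t • yE, v.2.1 + t * l, v.2.2 + t * (1 - l)) := by
      ext <;> simp; ring
    rw [← map_smul, ← map_sub, hv, hσ]
    exact h t
  let j : E →ₗᵢ[ℝ] W ⧸ (ℝ ∙ k) := ⟨π ∘ₗ σ.toLinearMap ∘ₗ LinearMap.inl ℝ E (ℝ × ℝ), fun e => by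
    refine le_antisymm ((Submodule.Quotient.norm_mk_le _ _).trans (by simp [hσ]))
      (hπσ fun t => ?_)
    have h₁ := norm_sub_norm_le e (t • yE)
    have h₂ : ‖t • yE‖ ≤ |t| := by
      rw [norm_smul, Real.norm_eq_abs]; exact mul_le_of_le_one_right (abs_nonneg t) hy₀
    simp only [LinearMap.inl_apply, Prod.fst_zero, Prod.snd_zero, zero_add, abs_mul,
      abs_of_nonneg hl, abs_of_nonneg (by linarith : 0 ≤ 1 - l)]
    linarith⟩
  obtain ⟨TF, hTF, hbound⟩ := hX.exists_extension hδ j E.subtypeₗᵢ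
  have hu {v : E × ℝ × ℝ} (hv : ‖σ v‖ = 1) : ‖TF (π (σ v))‖ ≤ 1 + δ :=
    (hbound _).2.trans (mul_le_of_le_one_right (by positivity)
      ((Submodule.Quotient.norm_mk_le _ _).trans hv.le))
  refine ⟨TF (π (σ (0, 1, 0))), TF (π (σ (0, 0, 1))), hu (by simp [hσ]), hu (by simp [hσ]), ?_, ?_⟩
  · have h : l • π (σ (0, 1, 0)) + (1 - l) • π (σ (0, 0, 1)) = j yE := by
      calc _ = π (σ (l • (0, 1, 0) + (1 - l) • (0, 0, 1))) := by
            simp only [map_add, map_smul]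
        _ = π (σ (yE, 0, 0)) := by
          refine (Submodule.Quotient.eq _).2 (Submodule.mem_span_singleton.2 ⟨-1, ?_⟩)
          rw [← map_smul, ← map_sub]
          congr 1
          ext <;> simp
    rw [← TF.map_smul, ← TF.map_smul, ← TF.map_add, h, hTF]
    rfl
  · have h : x + TF (π (σ (0, 1, 0))) = TF (π (σ (xE, 1, 0))) := by
      rw [← show TF (j xE) = x from hTF xE, ← TF.map_add]
      change TF (π (σ (xE, 0, 0)) + π (σ (0, 1, 0))) = _
      rw [← map_add, ← map_add]
      simp
    rw [h]
    refine le_trans ?_ (hbound _).1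
    gcongr
    refine hπσ fun t => ?_
    simp only [zero_add, abs_mul, abs_of_nonneg (by linarith : 0 ≤ 1 - l)]
    exact two_sub_two_mul_le_norm_sub_smul_add (x := xE) (y := yE) hx hy₀ hl hl2 t

theorem IsGurarii.exists_lt_apply_and_lt_norm_add (hX : IsGurarii X) {x : X} (hx : ‖x‖ = 1)
    {f : X →L[ℝ] ℝ} (hf : ‖f‖ = 1) {ε : ℝ} (hε : 0 < ε) :
    ∃ y : X, ‖y‖ ≤ 1 ∧ 1 - ε < f y ∧ 2 - ε < ‖x + y‖ := by
  obtain ⟨l, hl, hlε, hl2⟩ : ∃ l : ℝ, 0 < l ∧ 2 * l < ε ∧ l ≤ 1 / 2 :=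
    ⟨min ε 1 / 4, by positivity, by linarith [min_le_left ε 1], by linarith [min_le_right ε 1]⟩
  have hev : ∀ᶠ δ in 𝓝[>] (0 : ℝ), 0 < δ ∧ l * ((1 + δ) * (1 - ε)) < l - 2 * δ ∧
      2 - ε < (1 + δ)⁻¹ * (2 - 2 * l) - δ := by
    refine eventually_mem_nhdsWithin.and (nhdsWithin_le_nhds ?_)
    have h₁ : ContinuousAt (fun δ : ℝ => l * ((1 + δ) * (1 - ε)) - (l - 2 * δ)) 0 := by fun_prop
    have h₂ : ContinuousAt (fun δ : ℝ => (1 + δ)⁻¹ * (2 - 2 * l) - δ) 0 := by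
      fun_prop (disch := norm_num)
    filter_upwards [h₁.tendsto.eventually_lt_const (u := 0) (by simp; nlinarith),
      h₂.tendsto.eventually_const_lt (u := 2 - ε) (by simp; linarith)] with δ h₁ h₂
    exact ⟨by linarith, h₂⟩
  obtain ⟨δ, hδ, hfδ, hxδ⟩ := hev.exists
  obtain ⟨y₀, hy₀, hfy₀⟩ := f.exists_norm_le_one_lt_apply (show 1 - δ < ‖f‖ by linarith)
  obtain ⟨y₁, y₂, hy₁, hy₂, hcomb, hxy₁⟩ :=
    hX.exists_convex_combination_eq hx hy₀ hl.le hl2 hδ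
  have hfy₁ : (1 + δ) * (1 - ε) < f y₁ := by
    have hfy₂ : f y₂ ≤ 1 + δ := (f.apply_le_norm hf.le y₂).trans hy₂
    have h := congrArg f hcomb
    simp only [map_add, map_smul, smul_eq_mul] at h
    refine lt_of_mul_lt_mul_left ?_ hl.le
    nlinarith [mul_le_mul_of_nonneg_left hfy₂ (by linarith : 0 ≤ 1 - l)]
  have hδ' : 0 < 1 + δ := by linarith
  have hshrink : ‖y₁ - (1 + δ)⁻¹ • y₁‖ ≤ δ := by
    have h₀ : 0 ≤ 1 - (1 + δ)⁻¹ := sub_nonneg.2 (inv_le_one_of_one_le₀ (by linarith))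
    calc ‖y₁ - (1 + δ)⁻¹ • y₁‖ = (1 - (1 + δ)⁻¹) * ‖y₁‖ := by
          rw [← norm_smul_of_nonneg h₀, sub_smul, one_smul]
      _ ≤ (1 - (1 + δ)⁻¹) * (1 + δ) := mul_le_mul_of_nonneg_left hy₁ h₀
      _ = δ := by field_simp; ring
  refine ⟨(1 + δ)⁻¹ • y₁, ?_, ?_, ?_⟩
  · rw [norm_smul, Real.norm_of_nonneg (by positivity)]
    exact inv_mul_le_one_of_le₀ hy₁ hδ'.le
  · rwa [map_smul, smul_eq_mul, lt_inv_mul_iff₀ hδ']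
  · have h := norm_sub_norm_le (x + y₁) (y₁ - (1 + δ)⁻¹ • y₁)
    rw [show x + y₁ - (y₁ - (1 + δ)⁻¹ • y₁) = x + (1 + δ)⁻¹ • y₁ by abel] at h
    linarith

theorem IsGurarii.norm_id_add_smulRight (hX : IsGurarii X) (c : X →L[ℝ] ℝ) {x₀ : X}
    (hx₀ : ‖x₀‖ = 1) : ‖ContinuousLinearMap.id ℝ X + c.smulRight x₀‖ = 1 + ‖c‖ := by
  have : Nontrivial X := nontrivial_of_ne x₀ 0 (by rintro rfl; simp at hx₀)
  refine le_antisymm ((norm_add_le _ _).trans ?_) ?_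
  · rw [ContinuousLinearMap.norm_id, ContinuousLinearMap.norm_smulRight_apply, hx₀, mul_one]
  rcases eq_or_ne c 0 with rfl | hc
  · simp
  set A := ContinuousLinearMap.id ℝ X + c.smulRight x₀
  have hf : ‖‖c‖⁻¹ • c‖ = 1 := norm_smul_inv_norm hc
  have key : ∀ ε ∈ Set.Ioo (0 : ℝ) 1, (1 - ε) * (1 + ‖c‖ * (1 - ε)) ≤ ‖A‖ := by
    rintro ε ⟨hε, hε1⟩
    obtain ⟨y, hy, hcy, hxy⟩ := hX.exists_lt_apply_and_lt_norm_add hx₀ hf hε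
    obtain ⟨g, hg, hgxy⟩ := exists_dual_vector'' ℝ (x₀ + y)
    replace hgxy : g x₀ + g y = ‖x₀ + y‖ := by rw [← map_add]; exact_mod_cast hgxy
    have hgx : 1 - ε < g x₀ := by linarith [g.apply_le_norm hg x₀, g.apply_le_norm hg y]
    have hgy : 1 - ε < g y := by linarith [g.apply_le_norm hg x₀, g.apply_le_norm hg y]
    replace hcy : ‖c‖ * (1 - ε) < c y := by
      rwa [smul_apply, smul_eq_mul, lt_inv_mul_iff₀ (norm_pos_iff.2 hc)] at hcy
    have hcy₀ : 0 ≤ ‖c‖ * (1 - ε) := mul_nonneg (norm_nonneg c) (by linarith)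
    calc (1 - ε) * (1 + ‖c‖ * (1 - ε)) ≤ g y + c y * g x₀ := by
          nlinarith [mul_le_mul hcy.le hgx.le (by linarith) (hcy₀.trans hcy.le)]
      _ = g (A y) := by simp [A]
      _ ≤ ‖A y‖ := g.apply_le_norm hg _
      _ ≤ ‖A‖ := by simpa using A.le_opNorm_of_le hy
  have hlim : Tendsto (fun ε : ℝ => (1 - ε) * (1 + ‖c‖ * (1 - ε))) (𝓝[>] 0) (𝓝 (1 + ‖c‖)) := by
    have h : ContinuousAt (fun ε : ℝ => (1 - ε) * (1 + ‖c‖ * (1 - ε))) 0 := by fun_prop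
    simpa using h.tendsto.mono_left nhdsWithin_le_nhds
  exact le_of_tendsto hlim (eventually_of_mem (Ioo_mem_nhdsGT one_pos) key)

theorem IsGurarii.hasDaugavetProperty (hX : IsGurarii X) : HasDaugavetProperty X := by
  intro T hT
  obtain ⟨c, x₀, hx₀, rfl⟩ := T.exists_eq_smulRight_of_finrank_range_eq_one hT
  rw [hX.norm_id_add_smulRight c hx₀, ContinuousLinearMap.norm_smulRight_apply, hx₀, mul_one]

end Gurarii

theorem gurarii_daugavet_and_strongDiameterTwo_general
    (X : Type*) [NormedAddCommGroup X] [NormedSpace ℝ X]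
    (hX : IsGurarii X) :
    HasDaugavetProperty X ∧ HasStrongDiameterTwoProperty X :=
  ⟨hX.hasDaugavetProperty, hX.hasStrongDiameterTwoProperty⟩

theorem gurarii_daugavet_and_strongDiameterTwo
    (X : Type*) [NormedAddCommGroup X] [NormedSpace ℝ X] [CompleteSpace X]
    (hX : IsGurarii X) :
    HasDaugavetProperty X ∧ HasStrongDiameterTwoProperty X :=
  gurarii_daugavet_and_strongDiameterTwo_general X hX
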